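/- arXiv:1611.09754 — 6 statements merged into one kernel-verified Lean document; each statement's English description precedes it below -/
import Mathlib

section
/- Let X be a nonempty finite set of vectors in R^n with nonnegative entries, and let c_1,...,c_K be cost scenarios in R^n with nonnegative entries. Define the midpoint scenario ĉ = (1/K)·Σ_{i=1}^K c_i. If x̄ ∈ X minimizes ĉᵗx over X, then max_{i∈[K]} c_iᵗ x̄ ≤ K · min_{x∈X} max_{i∈[K]} c_iᵗ x, i.e., the midpoint solution is a K-approximation for the min-max problem. -/
/-- Worst-case cost of solution `x` over `K` scenarios `c`. -/
noncomputable def maxCost {n K : ℕ} (c : Fin K → Fin n → ℝ) (hK : 0 < K)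
    (x : Fin n → ℝ) : ℝ :=
  Finset.univ.sup' ⟨⟨0, hK⟩, Finset.mem_univ _⟩ fun i => ∑ j, c i j * x j

/-- The midpoint solution is a `K`-approximation for the min-max problem. -/
theorem stmt0 {n K : ℕ} (hK : 0 < K)
    (X : Finset (Fin n → ℝ)) (hX : X.Nonempty)
    (hXnn : ∀ x ∈ X, ∀ j, 0 ≤ x j)
    (c : Fin K → Fin n → ℝ) (hc : ∀ i j, 0 ≤ c i j)
    (chat : Fin n → ℝ)
    (hchat : chat = fun j => (1 / (K : ℝ)) * ∑ i, c i j)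
    (xbar : Fin n → ℝ) (hxbar : xbar ∈ X)
    (hmin : ∀ x ∈ X, (∑ j, chat j * xbar j) ≤ ∑ j, chat j * x j) :
    maxCost c hK xbar ≤ (K : ℝ) * X.inf' hX (maxCost c hK) := by
  obtain ⟨xs, hxs, hinf⟩ := Finset.exists_mem_eq_inf' hX (maxCost c hK)
  rw [hinf]
  have hKpos : (0:ℝ) < K := Nat.cast_pos.mpr hK
  -- chat dot x = (1/K) * Σ_i c_i dot x
  have hchatdot : ∀ x : Fin n → ℝ, (∑ j, chat j * x j)
      = (1 / (K:ℝ)) * ∑ i, ∑ j, c i j * x j := by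
    intro x
    rw [hchat]
    simp only [Finset.mul_sum, mul_assoc, Finset.sum_mul]
    rw [Finset.sum_comm]
  -- step 1: maxCost xbar ≤ Σ_i c_i·xbar
  have h1 : maxCost c hK xbar ≤ ∑ i, ∑ j, c i j * xbar j := by
    apply Finset.sup'_le
    intro i _
    apply Finset.single_le_sum (f := fun i => ∑ j, c i j * xbar j)
      (fun k _ => Finset.sum_nonneg fun j _ =>
        mul_nonneg (hc k j) (hXnn xbar hxbar j)) (Finset.mem_univ i)
  -- step 2: Σ_i c_i·xbar = K * chat·xbar ≤ K * chat·xs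
  have h2 : ∑ i, ∑ j, c i j * xbar j ≤ ∑ i, ∑ j, c i j * xs j := by
    have := hmin xs hxs
    rw [hchatdot, hchatdot] at this
    exact le_of_mul_le_mul_left (by linarith [this]) (by positivity : (0:ℝ) < 1/K)
  -- step 3: Σ_i c_i·xs ≤ K * maxCost xs
  have h3 : ∑ i, ∑ j, c i j * xs j ≤ (K:ℝ) * maxCost c hK xs := by
    calc ∑ i, ∑ j, c i j * xs j ≤ ∑ _i : Fin K, maxCost c hK xs := by
          apply Finset.sum_le_sum
          intro i _
          exact Finset.le_sup' (fun i => ∑ j, c i j * xs j) (Finset.mem_univ i)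
      _ = (K:ℝ) * maxCost c hK xs := by simp [mul_comm]
  linarith
end

section
/- Let X ⊆ R^n_{≥0} be a nonempty finite feasible set and c_1,...,c_K ∈ R^n_{≥0} scenarios with K even. Partition [K] into pairs S_1,...,S_{K/2} with S_j = {j_1, j_2}, and set c̄_j = (c_{j_1}+c_{j_2})/2. If x̄ minimizes max_{j∈[K/2]} c̄_jᵗx over X, then max_{i∈[K]} c_iᵗ x̄ ≤ 2 · min_{x∈X} max_{i∈[K]} c_iᵗ x. -/
/-- An optimal solution of the pairwise-aggregated min-max problem is a
2-approximation for the original min-max problem.  The partition of the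
`K = 2*m` scenarios into pairs `S_j = {π (j,0), π (j,1)}` is encoded by the
equivalence `π`. -/
theorem stmt1 {n m : ℕ} (hm : 0 < m)
    (X : Finset (Fin n → ℝ)) (hX : X.Nonempty)
    (hXnn : ∀ x ∈ X, ∀ j, 0 ≤ x j)
    (c : Fin (2 * m) → Fin n → ℝ) (hc : ∀ i j, 0 ≤ c i j)
    (π : Fin m × Fin 2 ≃ Fin (2 * m))
    (cbar : Fin m → Fin n → ℝ)
    (hcbar : ∀ j, cbar j = fun t => (c (π (j, 0)) t + c (π (j, 1)) t) / 2)
    (xbar : Fin n → ℝ) (hxbar : xbar ∈ X)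
    (hmin : ∀ x ∈ X, maxCost cbar hm xbar ≤ maxCost cbar hm x) :
    maxCost c (by omega) xbar ≤ 2 * X.inf' hX (maxCost c (by omega)) := by
  have hK : 0 < 2 * m := by omega
  -- cbar cost is below max cost for nonneg x
  have key : ∀ x ∈ X, maxCost cbar hm x ≤ maxCost c hK x := by
    intro x hx
    apply Finset.sup'_le
    intro j _
    have h0 : ∑ t, cbar j t * x t
        = ((∑ t, c (π (j, 0)) t * x t) + ∑ t, c (π (j, 1)) t * x t) / 2 := by
      simp only [hcbar]
      rw [← Finset.sum_add_distrib, Finset.sum_div]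
      exact Finset.sum_congr rfl fun t _ => by ring
    rw [h0]
    have h1 : ∑ t, c (π (j, 0)) t * x t ≤ maxCost c hK x :=
      Finset.le_sup' (fun i => ∑ t, c i t * x t) (Finset.mem_univ (π (j, 0)))
    have h2 : ∑ t, c (π (j, 1)) t * x t ≤ maxCost c hK x :=
      Finset.le_sup' (fun i => ∑ t, c i t * x t) (Finset.mem_univ (π (j, 1)))
    linarith
  have main : ∀ x ∈ X, maxCost c hK xbar ≤ 2 * maxCost c hK x := by
    intro x hx
    apply Finset.sup'_le
    intro i _
    obtain ⟨⟨j, b⟩, hjb⟩ := π.surjective i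
    have nn0 := Finset.sum_nonneg fun t (_ : t ∈ Finset.univ) =>
      mul_nonneg (hc (π (j, 0)) t) (hXnn xbar hxbar t)
    have nn1 := Finset.sum_nonneg fun t (_ : t ∈ Finset.univ) =>
      mul_nonneg (hc (π (j, 1)) t) (hXnn xbar hxbar t)
    have hle : ∑ t, c i t * xbar t
        ≤ (∑ t, c (π (j, 0)) t * xbar t) + ∑ t, c (π (j, 1)) t * xbar t := by
      subst hjb
      fin_cases b <;> simp <;> linarith
    have hbar : ∑ t, cbar j t * xbar t
        = ((∑ t, c (π (j, 0)) t * xbar t) + ∑ t, c (π (j, 1)) t * xbar t) / 2 := by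
      simp only [hcbar]
      rw [← Finset.sum_add_distrib, Finset.sum_div]
      exact Finset.sum_congr rfl fun t _ => by ring
    have hb : ∑ t, cbar j t * xbar t ≤ maxCost cbar hm xbar :=
      Finset.le_sup' (fun i => ∑ t, cbar i t * xbar t) (Finset.mem_univ j)
    have := hmin x hx
    have := key x hx
    linarith [hle, hbar, hb]
  obtain ⟨x₀, hx₀, hx₀eq⟩ := Finset.exists_mem_eq_inf' hX (maxCost c hK)
  rw [hx₀eq]
  exact main x₀ hx₀
end

section
/- Let X ⊆ R^n_{≥0} be a nonempty finite feasible set and let {S_j}_{j∈[m]} be a partition of [K] into m sets each of size r = K/m, with aggregated scenarios c̄_j = (1/r)·Σ_{s∈S_j} c_s, where c_1,...,c_K ∈ R^n_{≥0}. If x̄ minimizes max_{j∈[m]} c̄_jᵗ x over X, then max_{i∈[K]} c_iᵗ x̄ ≤ r · min_{x∈X} max_{i∈[K]} c_iᵗ x. More generally, if x̄ is an α-approximation for the aggregated problem, then it is an (α·r)-approximation for the original problem. -/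
/-- Aggregating `K = m*r` scenarios into `m` groups of size `r` (encoded by the
equivalence `π`): an optimal solution of the aggregated problem is an
`r`-approximation, and more generally an `α`-approximation of the aggregated
problem is an `(α*r)`-approximation of the original problem. -/
theorem stmt3 {n m r : ℕ} (hm : 0 < m) (hr : 0 < r)
    (X : Finset (Fin n → ℝ)) (hX : X.Nonempty)
    (hXnn : ∀ x ∈ X, ∀ j, 0 ≤ x j)
    (c : Fin (m * r) → Fin n → ℝ) (hc : ∀ i j, 0 ≤ c i j)
    (π : Fin m × Fin r ≃ Fin (m * r))
    (cbar : Fin m → Fin n → ℝ)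
    (hcbar : ∀ j, cbar j = fun t => (1 / (r : ℝ)) * ∑ s, c (π (j, s)) t) :
    (∀ xbar ∈ X, (∀ x ∈ X, maxCost cbar hm xbar ≤ maxCost cbar hm x) →
      maxCost c (by positivity) xbar ≤
        (r : ℝ) * X.inf' hX (maxCost c (by positivity))) ∧
    (∀ α : ℝ, 1 ≤ α → ∀ xbar ∈ X,
      maxCost cbar hm xbar ≤ α * X.inf' hX (maxCost cbar hm) →
      maxCost c (by positivity) xbar ≤
        α * (r : ℝ) * X.inf' hX (maxCost c (by positivity))) := by
  have hK' : 0 < m * r := by positivity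
  have hrne : (r : ℝ) ≠ 0 := by positivity
  have key : ∀ (x : Fin n → ℝ) (j : Fin m),
      ∑ t, cbar j t * x t = (1 / (r : ℝ)) * ∑ s, ∑ t, c (π (j, s)) t * x t := by
    intro x j
    calc ∑ t, cbar j t * x t
        = ∑ t, ∑ s, (1 / (r : ℝ)) * (c (π (j, s)) t * x t) := by
          simp only [hcbar]
          refine Finset.sum_congr rfl fun t _ => ?_
          simp only [Finset.sum_mul, Finset.mul_sum, mul_assoc]
      _ = ∑ s, ∑ t, (1 / (r : ℝ)) * (c (π (j, s)) t * x t) := Finset.sum_comm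
      _ = (1 / (r : ℝ)) * ∑ s, ∑ t, c (π (j, s)) t * x t := by
          rw [Finset.mul_sum]
          exact Finset.sum_congr rfl fun s _ => (Finset.mul_sum _ _ _).symm
  have le_max : ∀ (x : Fin n → ℝ) (i : Fin (m * r)),
      ∑ t, c i t * x t ≤ maxCost c hK' x := by
    intro x i
    unfold maxCost
    exact Finset.le_sup' (fun i => ∑ t, c i t * x t) (Finset.mem_univ i)
  -- B : aggregated worst case is below original worst case
  have B : ∀ x : Fin n → ℝ, maxCost cbar hm x ≤ maxCost c hK' x := by
    intro x
    unfold maxCost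
    apply Finset.sup'_le
    intro j _
    rw [key]
    have h1 : ∑ s, ∑ t, c (π (j, s)) t * x t ≤ ∑ _s : Fin r, maxCost c hK' x :=
      Finset.sum_le_sum fun s _ => le_max x _
    have h2 : (∑ _s : Fin r, maxCost c hK' x) = (r : ℝ) * maxCost c hK' x := by
      simp [Finset.sum_const, mul_comm]
    calc (1 / (r : ℝ)) * ∑ s, ∑ t, c (π (j, s)) t * x t
        ≤ (1 / (r : ℝ)) * ((r : ℝ) * maxCost c hK' x) := by
          rw [← h2]; exact mul_le_mul_of_nonneg_left h1 (by positivity)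
      _ = maxCost c hK' x := by field_simp
  -- A : original worst case ≤ r * aggregated worst case, for nonneg x
  have A : ∀ x ∈ X, maxCost c hK' x ≤ (r : ℝ) * maxCost cbar hm x := by
    intro x hx
    unfold maxCost
    apply Finset.sup'_le
    intro i _
    have hp : π (π.symm i) = i := π.apply_symm_apply i
    have hnn : ∀ s' : Fin r, 0 ≤ ∑ t, c (π ((π.symm i).1, s')) t * x t :=
      fun s' => Finset.sum_nonneg fun t _ => mul_nonneg (hc _ t) (hXnn x hx t)
    calc ∑ t, c i t * x t
        = ∑ t, c (π ((π.symm i).1, (π.symm i).2)) t * x t := by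
          rw [Prod.mk.eta, hp]
      _ ≤ ∑ s', ∑ t, c (π ((π.symm i).1, s')) t * x t :=
          Finset.single_le_sum (fun s' _ => hnn s') (Finset.mem_univ _)
      _ = (r : ℝ) * ∑ t, cbar (π.symm i).1 t * x t := by
          rw [key]; field_simp
      _ ≤ (r : ℝ) * maxCost cbar hm x := by
          refine mul_le_mul_of_nonneg_left ?_ (by positivity)
          unfold maxCost
          exact Finset.le_sup' (fun j => ∑ t, cbar j t * x t) (Finset.mem_univ _)
  have hinf : X.inf' hX (maxCost cbar hm) ≤ X.inf' hX (maxCost c hK') := by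
    apply Finset.le_inf'
    intro x hx
    exact le_trans (Finset.inf'_le _ hx) (B x)
  have main : ∀ α : ℝ, 0 ≤ α → ∀ xbar ∈ X,
      maxCost cbar hm xbar ≤ α * X.inf' hX (maxCost cbar hm) →
      maxCost c hK' xbar ≤ α * (r : ℝ) * X.inf' hX (maxCost c hK') := by
    intro α hα xbar hxbar h
    calc maxCost c hK' xbar ≤ (r : ℝ) * maxCost cbar hm xbar := A xbar hxbar
      _ ≤ (r : ℝ) * (α * X.inf' hX (maxCost cbar hm)) :=
          mul_le_mul_of_nonneg_left h (by positivity)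
      _ ≤ (r : ℝ) * (α * X.inf' hX (maxCost c hK')) :=
          mul_le_mul_of_nonneg_left (mul_le_mul_of_nonneg_left hinf hα)
            (by positivity)
      _ = α * (r : ℝ) * X.inf' hX (maxCost c hK') := by ring
  constructor
  · intro xbar hxbar hopt
    have h1 : maxCost cbar hm xbar ≤ 1 * X.inf' hX (maxCost cbar hm) := by
      rw [one_mul]
      exact Finset.le_inf' _ _ fun x hx => hopt x hx
    have := main 1 zero_le_one xbar hxbar h1
    simpa using this
  · intro α hα xbar hxbar h
    exact main α (le_trans zero_le_one hα) xbar hxbar h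
end

section
/- Let X ⊆ R^n_{≥0} be nonempty and finite, c_1,...,c_K ∈ R^n_{≥0}, opt(c) = min_{y∈X} cᵗy, and let {S_j}_{j∈[m]} partition [K] into m groups of equal size r = K/m. Define c̄_j = (1/r)·Σ_{s∈S_j} c_s and d_j = (1/r)·Σ_{s∈S_j} opt(c_s). If x̄ minimizes max_{j∈[m]} (c̄_jᵗ x − d_j) over X, then max_{i∈[K]} (c_iᵗ x̄ − opt(c_i)) ≤ r · min_{x∈X} max_{i∈[K]} (c_iᵗ x − opt(c_i)). -/
/-- Solving the generalized min-max regret problem obtained by aggregating the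
`K = m*r` scenarios into `m` groups of size `r` (with constants `d j` equal to
the average of the `opt`-values of the group) yields an `r`-approximation for
the original min-max regret problem. -/
theorem stmt6 {n m r : ℕ} (hm : 0 < m) (hr : 0 < r)
    (X : Finset (Fin n → ℝ)) (hX : X.Nonempty)
    (hXnn : ∀ x ∈ X, ∀ t, 0 ≤ x t)
    (c : Fin (m * r) → Fin n → ℝ) (hc : ∀ i t, 0 ≤ c i t)
    (opt : Fin (m * r) → ℝ)
    (hopt : ∀ i, opt i = X.inf' hX fun y => ∑ t, c i t * y t)
    (π : Fin m × Fin r ≃ Fin (m * r))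
    (cbar : Fin m → Fin n → ℝ)
    (hcbar : ∀ j, cbar j = fun t => (1 / (r : ℝ)) * ∑ s, c (π (j, s)) t)
    (d : Fin m → ℝ)
    (hd : ∀ j, d j = (1 / (r : ℝ)) * ∑ s, opt (π (j, s)))
    (xbar : Fin n → ℝ) (hxbar : xbar ∈ X)
    (hmin : ∀ x ∈ X,
      (Finset.univ.sup' ⟨⟨0, hm⟩, Finset.mem_univ _⟩ fun j =>
        (∑ t, cbar j t * xbar t) - d j) ≤
      Finset.univ.sup' ⟨⟨0, hm⟩, Finset.mem_univ _⟩ fun j =>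
        (∑ t, cbar j t * x t) - d j) :
    (Finset.univ.sup' ⟨⟨0, by positivity⟩, Finset.mem_univ _⟩ fun i =>
        (∑ t, c i t * xbar t) - opt i) ≤
      (r : ℝ) * X.inf' hX fun x =>
        Finset.univ.sup' ⟨⟨0, by positivity⟩, Finset.mem_univ _⟩ fun i =>
          (∑ t, c i t * x t) - opt i := by
  have hrpos : (0:ℝ) < r := by positivity
  have hrne : (r:ℝ) ≠ 0 := hrpos.ne'
  have hK : 0 < m * r := Nat.mul_pos hm hr
  have ne1 : (Finset.univ : Finset (Fin (m*r))).Nonempty := ⟨⟨0, hK⟩, Finset.mem_univ _⟩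
  have ne2 : (Finset.univ : Finset (Fin m)).Nonempty := ⟨⟨0, hm⟩, Finset.mem_univ _⟩
  set R : Fin (m*r) → (Fin n → ℝ) → ℝ := fun i x => (∑ t, c i t * x t) - opt i with hRdef
  have hRnn : ∀ x ∈ X, ∀ i, 0 ≤ R i x := by
    intro x hx i
    have h := Finset.inf'_le (fun y => ∑ t, c i t * y t) hx
    simp only [hRdef, hopt i, sub_nonneg]
    exact h
  have key : ∀ (x : Fin n → ℝ) (j : Fin m),
      (r:ℝ) * ((∑ t, cbar j t * x t) - d j) = ∑ s, R (π (j, s)) x := by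
    intro x j
    rw [hcbar, hd]
    simp only [hRdef]
    rw [Finset.sum_sub_distrib]
    have hA : (∑ t, ((1/(r:ℝ)) * ∑ s, c (π (j, s)) t) * x t)
        = (1/(r:ℝ)) * ∑ s, ∑ t, c (π (j, s)) t * x t := by
      simp_rw [Finset.mul_sum, Finset.sum_mul, mul_assoc]
      rw [Finset.sum_comm]
    rw [hA]
    field_simp
  set supR : (Fin n → ℝ) → ℝ := fun x => Finset.univ.sup' ne1 fun i => R i x with hsupR
  set supG : (Fin n → ℝ) → ℝ := fun x => Finset.univ.sup' ne2 fun j =>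
    (∑ t, cbar j t * x t) - d j with hsupG
  have step1 : supR xbar ≤ (r:ℝ) * supG xbar := by
    apply Finset.sup'_le
    intro i _
    obtain ⟨⟨j, s⟩, rfl⟩ := π.surjective i
    have h1 : R (π (j, s)) xbar ≤ ∑ s', R (π (j, s')) xbar :=
      Finset.single_le_sum (f := fun s' => R (π (j, s')) xbar) (fun s' _ => hRnn xbar hxbar _) (Finset.mem_univ s)
    rw [← key] at h1
    exact h1.trans (mul_le_mul_of_nonneg_left
      (Finset.le_sup' (fun j => (∑ t, cbar j t * xbar t) - d j) (Finset.mem_univ j))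
      hrpos.le)
  have step3 : ∀ x ∈ X, (r:ℝ) * supG x ≤ (r:ℝ) * supR x := by
    intro x hx
    apply mul_le_mul_of_nonneg_left _ hrpos.le
    apply Finset.sup'_le
    intro j _
    have h1 : (r:ℝ) * ((∑ t, cbar j t * x t) - d j) ≤ (r:ℝ) * supR x := by
      rw [key]
      calc ∑ s, R (π (j, s)) x ≤ ∑ _s : Fin r, supR x :=
            Finset.sum_le_sum (fun s _ => Finset.le_sup' (fun i => R i x) (Finset.mem_univ _))
        _ = (r:ℝ) * supR x := by
            simp [Finset.sum_const, nsmul_eq_mul]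
    exact le_of_mul_le_mul_left h1 hrpos
  have main : ∀ x ∈ X, supR xbar ≤ (r:ℝ) * supR x := fun x hx =>
    step1.trans ((mul_le_mul_of_nonneg_left (hmin x hx) hrpos.le).trans (step3 x hx))
  obtain ⟨x0, hx0, heq⟩ := Finset.exists_mem_eq_inf' hX
    (fun x => Finset.univ.sup' ne1 fun i => (∑ t, c i t * x t) - opt i)
  calc (Finset.univ.sup' ne1 fun i => (∑ t, c i t * xbar t) - opt i) = supR xbar := rfl
    _ ≤ (r:ℝ) * supR x0 := main x0 hx0
    _ = _ := by rw [heq]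
end

section
/- There exists an instance of the min-max shortest path problem demonstrating tightness of the aggregation bound: for K = 2^k scenarios aggregated into 2^ℓ groups of r = 2^{k−ℓ} consecutive scenarios, there are two s-t paths P_top and P_bot such that (a) both paths have identical (and equal) worst-case cost with respect to the aggregated scenarios, (b) the worst-case cost of P_top over the original K scenarios is r, and (c) the worst-case cost of P_bot over the original K scenarios is 1. Hence an optimal solution of the aggregated problem can be a factor r = K/2^ℓ worse than the optimum of the original problem. -/
/-!
Take `vbot ≡ 1` (the bottom path meets every scenario once) and let `vtop` put the whole
mass `r` of each block on its first scenario (the `r` edges of a top block all carry the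
cost vector of that scenario). Averaging over a block of `r` consecutive scenarios gives
`1` for both, yet the worst case of `vtop` is `r` while that of `vbot` is `1`.
-/

open Finset

theorem Nat.filter_range_div_eq {n r j : ℕ} (hr : 0 < r) (hj : j * r + r ≤ n) :
    (range n).filter (· / r = j) = Ico (j * r) (j * r + r) := by
  ext i
  simp only [mem_filter, mem_range, mem_Ico, Nat.div_eq_iff hr]
  omega

theorem Fin.sum_filter_div_eq {M : Type*} [AddCommMonoid M] {n r j : ℕ} (hr : 0 < r)
    (hj : j * r + r ≤ n) (f : ℕ → M) :
    ∑ i ∈ univ.filter (fun i : Fin n => i.val / r = j), f i = ∑ t ∈ range r, f (j * r + t) := by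
  rw [sum_filter, Fin.sum_univ_eq_sum_range (fun i => if i / r = j then f i else 0),
    ← sum_filter, Nat.filter_range_div_eq hr hj, sum_Ico_eq_sum_range, Nat.add_sub_cancel_left]

theorem sum_range_ite_dvd_mul_add {M : Type*} [AddCommMonoid M] {r : ℕ} (hr : 0 < r)
    (j : ℕ) (c : M) : ∑ t ∈ range r, (if r ∣ j * r + t then c else 0) = c := by
  have hdvd : ∀ t ∈ range r, (r ∣ j * r + t ↔ t = 0) := fun t ht => by
    rw [Nat.dvd_add_right (Nat.dvd_mul_left r j)]
    exact ⟨fun h => Nat.eq_zero_of_dvd_of_lt h (mem_range.mp ht), fun h => h ▸ dvd_zero r⟩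
  rw [sum_congr rfl fun t ht => if_congr (hdvd t ht) rfl rfl, sum_ite_eq', if_pos (mem_range.mpr hr)]

/-- Tightness of the aggregation bound for min-max shortest path, in abstract
form: for `K = 2^k` scenarios aggregated into `2^l` consecutive groups of size
`r = 2^(k-l)`, there are two path cost vectors `vtop` and `vbot` (giving the
total cost of the path in each scenario) such that both have all aggregated
costs equal to `1`, while the worst-case cost of the top path is `r` and that
of the bottom path is `1`. -/
theorem stmt8 (k l : ℕ) (hl : l ≤ k) :
    ∃ vtop vbot : Fin (2 ^ k) → ℝ,
      (∀ j : Fin (2 ^ l),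
        (1 / ((2 ^ (k - l) : ℕ) : ℝ)) *
            (∑ i ∈ Finset.univ.filter
              (fun i : Fin (2 ^ k) => i.val / 2 ^ (k - l) = j.val), vtop i) = 1 ∧
        (1 / ((2 ^ (k - l) : ℕ) : ℝ)) *
            (∑ i ∈ Finset.univ.filter
              (fun i : Fin (2 ^ k) => i.val / 2 ^ (k - l) = j.val), vbot i) = 1) ∧
      Finset.univ.sup' ⟨⟨0, by positivity⟩, Finset.mem_univ _⟩ vtop
        = ((2 ^ (k - l) : ℕ) : ℝ) ∧
      Finset.univ.sup' ⟨⟨0, by positivity⟩, Finset.mem_univ _⟩ vbot = 1 := by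
  set r := 2 ^ (k - l)
  have hr : 0 < r := by positivity
  have hblock (j : Fin (2 ^ l)) : j * r + r ≤ 2 ^ k := by
    have : (j + 1) * r ≤ 2 ^ l * r := Nat.mul_le_mul_right r j.isLt
    rwa [← pow_add, Nat.add_sub_cancel' hl, Nat.succ_mul] at this
  refine ⟨fun i => if r ∣ i.val then (r : ℝ) else 0, fun _ => 1, fun j => ⟨?_, ?_⟩, ?_,
    sup'_const _ _⟩
  · rw [Fin.sum_filter_div_eq hr (hblock j) fun i => if r ∣ i then (r : ℝ) else 0,
      sum_range_ite_dvd_mul_add hr]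
    field_simp
  · rw [Fin.sum_filter_div_eq hr (hblock j) fun _ => (1 : ℝ), sum_const, card_range,
      nsmul_one]
    field_simp
  · refine le_antisymm (sup'_le _ _ fun i _ => ?_) (le_sup'_of_le _ (mem_univ 0) (by simp))
    split_ifs <;> simp
end

section
/- There exists an instance showing that naive scenario aggregation fails to be a 2-approximation for min-max regret: consider X = {x_1, x_2, x_3} with 4 scenarios where the cost of x_1 is (1,1,1,1), the cost of x_2 is (4,0,0,0), and the cost of x_3 is (0,4,0,0) across the scenarios. The optimal min-max regret value is 1 (attained by x_1). After aggregating scenarios {1,2} and {3,4} into averages, x_2 and x_3 each have aggregated cost (2,0) and x_1 has (1,1); x_2 is optimal for the aggregated min-max regret problem (with standard regret normalization opt of the aggregated scenarios) with aggregated regret 1, but its true regret in the original problem is 4, which equals 4 times the optimum. -/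
lemma inf3 (f : Fin 3 → ℝ) :
    Finset.univ.inf' Finset.univ_nonempty f = min (f 0) (min (f 1) (f 2)) := by
  show Finset.inf' {0,1,2} _ f = _
  simp [Finset.inf'_insert, min_assoc]

lemma sup4 (f : Fin 4 → ℝ) :
    Finset.univ.sup' Finset.univ_nonempty f = max (f 0) (max (f 1) (max (f 2) (f 3))) := by
  show Finset.sup' {0,1,2,3} _ f = _
  simp [Finset.sup'_insert, max_assoc]

lemma sup2 (f : Fin 2 → ℝ) :
    Finset.univ.sup' Finset.univ_nonempty f = max (f 0) (f 1) := by
  show Finset.sup' {0,1} _ f = _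
  simp [Finset.sup'_insert]

/-- Counterexample: naive scenario aggregation is not a 2-approximation for
min-max regret.  Three solutions with scenario costs `(1,1,1,1)`, `(4,0,0,0)`,
`(0,4,0,0)`: original regrets are `1, 4, 4`; after aggregating scenarios
`{1,2}` and `{3,4}` into averages, all (standard) aggregated regrets equal `1`,
so solution `x₂` is aggregated-optimal, yet its true regret `4` is `4` times
the original optimum. -/
theorem stmt12
    (v : Fin 3 → Fin 4 → ℝ)
    (hv : v = ![![1, 1, 1, 1], ![4, 0, 0, 0], ![0, 4, 0, 0]])
    (opt : Fin 4 → ℝ)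
    (hopt : ∀ i, opt i = Finset.univ.inf' Finset.univ_nonempty fun x => v x i)
    (reg : Fin 3 → ℝ)
    (hreg : ∀ x, reg x = Finset.univ.sup' Finset.univ_nonempty fun i => v x i - opt i)
    (va : Fin 3 → Fin 2 → ℝ)
    (hva : ∀ x, va x = ![(v x 0 + v x 1) / 2, (v x 2 + v x 3) / 2])
    (opta : Fin 2 → ℝ)
    (hopta : ∀ j, opta j = Finset.univ.inf' Finset.univ_nonempty fun x => va x j)
    (rega : Fin 3 → ℝ)
    (hrega : ∀ x, rega x = Finset.univ.sup' Finset.univ_nonempty fun j => va x j - opta j) :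
    (reg 0 = 1 ∧ reg 1 = 4 ∧ reg 2 = 4) ∧
    (rega 0 = 1 ∧ rega 1 = 1 ∧ rega 2 = 1) ∧
    (∀ x, rega 1 ≤ rega x) ∧
    reg 1 = 4 * Finset.univ.inf' Finset.univ_nonempty reg := by
  have e00 : v 0 0 = 1 := by rw [hv]; rfl
  have e01 : v 0 1 = 1 := by rw [hv]; rfl
  have e02 : v 0 2 = 1 := by rw [hv]; rfl
  have e03 : v 0 3 = 1 := by rw [hv]; rfl
  have e10 : v 1 0 = 4 := by rw [hv]; rfl
  have e11 : v 1 1 = 0 := by rw [hv]; rfl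
  have e12 : v 1 2 = 0 := by rw [hv]; rfl
  have e13 : v 1 3 = 0 := by rw [hv]; rfl
  have e20 : v 2 0 = 0 := by rw [hv]; rfl
  have e21 : v 2 1 = 4 := by rw [hv]; rfl
  have e22 : v 2 2 = 0 := by rw [hv]; rfl
  have e23 : v 2 3 = 0 := by rw [hv]; rfl
  have hopt' : ∀ i, opt i = min (v 0 i) (min (v 1 i) (v 2 i)) := fun i => by rw [hopt, inf3]
  have h0 : opt 0 = 0 := by rw [hopt', e00, e10, e20]; norm_num
  have h1 : opt 1 = 0 := by rw [hopt', e01, e11, e21]; norm_num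
  have h2 : opt 2 = 0 := by rw [hopt', e02, e12, e22]; norm_num
  have h3 : opt 3 = 0 := by rw [hopt', e03, e13, e23]; norm_num
  have hr : ∀ x, reg x = max (v x 0 - opt 0) (max (v x 1 - opt 1) (max (v x 2 - opt 2) (v x 3 - opt 3))) :=
    fun x => by rw [hreg, sup4]
  have r0 : reg 0 = 1 := by rw [hr, h0, h1, h2, h3, e00, e01, e02, e03]; norm_num
  have r1 : reg 1 = 4 := by rw [hr, h0, h1, h2, h3, e10, e11, e12, e13]; norm_num
  have r2 : reg 2 = 4 := by rw [hr, h0, h1, h2, h3, e20, e21, e22, e23]; norm_num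
  have hva0 : ∀ x, va x 0 = (v x 0 + v x 1) / 2 := fun x => by rw [hva]; rfl
  have hva1 : ∀ x, va x 1 = (v x 2 + v x 3) / 2 := fun x => by rw [hva]; rfl
  have va00 : va 0 0 = 1 := by rw [hva0, e00, e01]; norm_num
  have va01 : va 0 1 = 1 := by rw [hva1, e02, e03]; norm_num
  have va10 : va 1 0 = 2 := by rw [hva0, e10, e11]; norm_num
  have va11 : va 1 1 = 0 := by rw [hva1, e12, e13]; norm_num
  have va20 : va 2 0 = 2 := by rw [hva0, e20, e21]; norm_num
  have va21 : va 2 1 = 0 := by rw [hva1, e22, e23]; norm_num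
  have ha0 : opta 0 = 1 := by rw [hopta, inf3]; rw [va00, va10, va20]; norm_num
  have ha1 : opta 1 = 0 := by rw [hopta, inf3]; rw [va01, va11, va21]; norm_num
  have hra : ∀ x, rega x = max (va x 0 - opta 0) (va x 1 - opta 1) := fun x => by rw [hrega, sup2]
  have ra0 : rega 0 = 1 := by rw [hra, ha0, ha1, va00, va01]; norm_num
  have ra1 : rega 1 = 1 := by rw [hra, ha0, ha1, va10, va11]; norm_num
  have ra2 : rega 2 = 1 := by rw [hra, ha0, ha1, va20, va21]; norm_num
  refine ⟨⟨r0, r1, r2⟩, ⟨ra0, ra1, ra2⟩, ?_, ?_⟩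
  · intro x; fin_cases x <;> simp [ra0, ra1, ra2]
  · rw [inf3, r0, r1, r2]; norm_num
end
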